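/- Let J(ε) = ∫₀ᵀ (2λ∫₀ᵘ F(g_ε(v), g_ε'(v))(e^{σ²v}−1)dv + 1)·F(g_ε(u), g_ε'(u)) du with g_ε = f₁ + ε f₂ and f₂(0) = f₂(T) = 0. Then J'(ε) = ∫₀ᵀ (2λ∫₀ᵘ f₂(v)(e^{σ²v}−1)[∂F/∂g_ε − d/dv(∂F/∂g_ε')]dv − 2λ∫₀ᵘ f₂(v) (∂F/∂g_ε') σ² e^{σ²v} dv)·F(g_ε(u), g_ε'(u)) du + ∫₀ᵀ γ_ε(u) f₂(u)[∂F/∂g_ε − d/du(∂F/∂g_ε')] du, where γ_ε(u) = 2λ∫₀ᵘ F(g_ε(v),g_ε'(v))(e^{σ²v}−1)dv + 1. -/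

import Mathlib

open MeasureTheory intervalIntegral Set Metric

private theorem aux_deriv_main (T lam : ℝ) (w : ℝ → ℝ) (hw : Continuous w)
    (Φ Ψ : ℝ → ℝ → ℝ)
    (hΦ : Continuous (Function.uncurry Φ)) (hΨ : Continuous (Function.uncurry Ψ))
    (hd : ∀ a u : ℝ, HasDerivAt (fun x => Φ x u) (Ψ a u) a) (ε : ℝ) :
    HasDerivAt (fun a => ∫ u in (0:ℝ)..T,
        (2 * lam * (∫ v in (0:ℝ)..u, Φ a v * w v) + 1) * Φ a u)
      (∫ u in (0:ℝ)..T,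
        2 * lam * (∫ v in (0:ℝ)..u, Ψ ε v * w v) * Φ ε u
          + (2 * lam * (∫ v in (0:ℝ)..u, Φ ε v * w v) + 1) * Ψ ε u) ε := by
  have hΦw : Continuous (Function.uncurry fun a v => Φ a v * w v) :=
    hΦ.mul (hw.comp continuous_snd)
  have hΨw : Continuous (Function.uncurry fun a v => Ψ a v * w v) :=
    hΨ.mul (hw.comp continuous_snd)
  -- joint continuity of the primitives
  have hI : Continuous (fun p : ℝ × ℝ => ∫ v in (0:ℝ)..p.2, Φ p.1 v * w v) :=
    continuous_parametric_primitive_of_continuous hΦw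
  have hIε : Continuous (fun p : ℝ × ℝ => ∫ v in (0:ℝ)..p.2, Ψ p.1 v * w v) :=
    continuous_parametric_primitive_of_continuous hΨw
  -- derivative of the inner integral in the parameter
  have hDI : ∀ (x₀ u : ℝ), HasDerivAt (fun x => ∫ v in (0:ℝ)..u, Φ x v * w v)
      (∫ v in (0:ℝ)..u, Ψ x₀ v * w v) x₀ := by
    intro x₀ u
    have hK : IsCompact (closedBall x₀ 1 ×ˢ uIcc (0:ℝ) u) :=
      (isCompact_closedBall _ _).prod isCompact_uIcc
    obtain ⟨C, hC⟩ := hK.exists_bound_of_continuousOn hΨw.continuousOn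
    refine (intervalIntegral.hasDerivAt_integral_of_dominated_loc_of_deriv_le
      (F := fun x v => Φ x v * w v) (F' := fun x v => Ψ x v * w v)
      (bound := fun _ => C) (ball_mem_nhds _ one_pos) ?_ ?_ ?_ ?_ ?_ ?_).2
    · exact Filter.Eventually.of_forall fun x =>
        ((hΦw.comp (Continuous.prodMk_right x)).aestronglyMeasurable)
    · exact (hΦw.comp (Continuous.prodMk_right x₀)).intervalIntegrable _ _
    · exact (hΨw.comp (Continuous.prodMk_right x₀)).aestronglyMeasurable
    · refine Filter.Eventually.of_forall fun v hv x hx => hC (x, v) ?_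
      exact ⟨ball_subset_closedBall hx, uIoc_subset_uIcc hv⟩
    · exact intervalIntegrable_const
    · exact Filter.Eventually.of_forall fun v hv x hx => (hd x v).mul_const (w v)
  -- the outer integrand and its parameter derivative
  have hout : Continuous (Function.uncurry fun (a u : ℝ) =>
      (2 * lam * (∫ v in (0:ℝ)..u, Φ a v * w v) + 1) * Φ a u) :=
    (((continuous_const.mul hI).add continuous_const).mul hΦ)
  have hout' : Continuous (Function.uncurry fun (a u : ℝ) =>
      2 * lam * (∫ v in (0:ℝ)..u, Ψ a v * w v) * Φ a u
        + (2 * lam * (∫ v in (0:ℝ)..u, Φ a v * w v) + 1) * Ψ a u) :=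
    ((continuous_const.mul hIε).mul hΦ).add
      (((continuous_const.mul hI).add continuous_const).mul hΨ)
  have hK : IsCompact (closedBall ε 1 ×ˢ uIcc (0:ℝ) T) :=
    (isCompact_closedBall _ _).prod isCompact_uIcc
  obtain ⟨C, hC⟩ := hK.exists_bound_of_continuousOn hout'.continuousOn
  refine (intervalIntegral.hasDerivAt_integral_of_dominated_loc_of_deriv_le
    (F := fun a u => (2 * lam * (∫ v in (0:ℝ)..u, Φ a v * w v) + 1) * Φ a u)
    (F' := fun a u => 2 * lam * (∫ v in (0:ℝ)..u, Ψ a v * w v) * Φ a u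
        + (2 * lam * (∫ v in (0:ℝ)..u, Φ a v * w v) + 1) * Ψ a u)
    (bound := fun _ => C) (ball_mem_nhds _ one_pos) ?_ ?_ ?_ ?_ ?_ ?_).2
  · exact Filter.Eventually.of_forall fun a =>
      ((hout.comp (Continuous.prodMk_right a)).aestronglyMeasurable)
  · exact (hout.comp (Continuous.prodMk_right ε)).intervalIntegrable _ _
  · exact (hout'.comp (Continuous.prodMk_right ε)).aestronglyMeasurable
  · refine Filter.Eventually.of_forall fun u hu x hx => hC (x, u) ?_
    exact ⟨ball_subset_closedBall hx, uIoc_subset_uIcc hu⟩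
  · exact intervalIntegrable_const
  · refine Filter.Eventually.of_forall fun u hu x hx => ?_
    exact (((hDI x u).const_mul (2 * lam)).add_const 1).mul (hd x u)
private theorem aux_ibp_inner (σ : ℝ) (f₂ : ℝ → ℝ) (hf₂ : ContDiff ℝ 1 f₂) (hf₂0 : f₂ 0 = 0)
    (A B dB : ℝ → ℝ) (hA : Continuous A)
    (hB : ∀ r, HasDerivAt B (dB r) r) (hdB : Continuous dB) (u : ℝ) :
    ∫ v in (0:ℝ)..u, (f₂ v * A v + deriv f₂ v * B v) * (Real.exp (σ ^ 2 * v) - 1)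
      = (∫ v in (0:ℝ)..u, f₂ v * (Real.exp (σ ^ 2 * v) - 1) * (A v - dB v))
        - (∫ v in (0:ℝ)..u, f₂ v * B v * σ ^ 2 * Real.exp (σ ^ 2 * v))
        + f₂ u * (B u * (Real.exp (σ ^ 2 * u) - 1)) := by
  have hdf₂c : Continuous (deriv f₂) := hf₂.continuous_deriv le_rfl
  have hf₂c : Continuous f₂ := hf₂.continuous
  have hBd : Differentiable ℝ B := fun r => (hB r).differentiableAt
  have hBc : Continuous B := hBd.continuous
  have hec : Continuous fun v : ℝ => Real.exp (σ ^ 2 * v) := by fun_prop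
  have hwc : Continuous fun v : ℝ => Real.exp (σ ^ 2 * v) - 1 := by fun_prop
  have hwD : ∀ v : ℝ, HasDerivAt (fun v => Real.exp (σ ^ 2 * v) - 1)
      (σ ^ 2 * Real.exp (σ ^ 2 * v)) v := fun v => by
    simpa [mul_comm] using ((hasDerivAt_id v).const_mul (σ ^ 2)).exp.sub_const 1
  have key := intervalIntegral.integral_mul_deriv_eq_deriv_mul
    (u := fun v => B v * (Real.exp (σ ^ 2 * v) - 1)) (v := f₂)
    (u' := fun v => dB v * (Real.exp (σ ^ 2 * v) - 1) + B v * (σ ^ 2 * Real.exp (σ ^ 2 * v)))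
    (v' := deriv f₂) (a := 0) (b := u)
    (fun x _ => (hB x).mul (hwD x))
    (fun x _ => (hf₂.differentiable one_ne_zero x).hasDerivAt)
    (((hdB.mul hwc).add (hBc.mul (continuous_const.mul hec))).intervalIntegrable _ _)
    (hdf₂c.intervalIntegrable _ _)
  simp only [hf₂0, mul_zero] at key
  have e1 : (∫ v in (0:ℝ)..u, (f₂ v * A v + deriv f₂ v * B v) * (Real.exp (σ ^ 2 * v) - 1))
      = (∫ v in (0:ℝ)..u, f₂ v * (Real.exp (σ ^ 2 * v) - 1) * A v)
        + ∫ v in (0:ℝ)..u, B v * (Real.exp (σ ^ 2 * v) - 1) * deriv f₂ v := by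
    rw [← intervalIntegral.integral_add
      (((hf₂c.fun_mul hwc).fun_mul hA).intervalIntegrable _ _)
      (((hBc.fun_mul hwc).fun_mul hdf₂c).intervalIntegrable _ _)]
    exact intervalIntegral.integral_congr fun v _ => by ring
  have e2 : (∫ v in (0:ℝ)..u,
        (dB v * (Real.exp (σ ^ 2 * v) - 1) + B v * (σ ^ 2 * Real.exp (σ ^ 2 * v))) * f₂ v)
      = (∫ v in (0:ℝ)..u, f₂ v * (Real.exp (σ ^ 2 * v) - 1) * dB v)
        + ∫ v in (0:ℝ)..u, f₂ v * B v * σ ^ 2 * Real.exp (σ ^ 2 * v) := by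
    rw [← intervalIntegral.integral_add
      (((hf₂c.fun_mul hwc).fun_mul hdB).intervalIntegrable _ _)
      ((((hf₂c.fun_mul hBc).fun_mul continuous_const).fun_mul hec).intervalIntegrable _ _)]
    exact intervalIntegral.integral_congr fun v _ => by ring
  have e3 : (∫ v in (0:ℝ)..u, f₂ v * (Real.exp (σ ^ 2 * v) - 1) * (A v - dB v))
      = (∫ v in (0:ℝ)..u, f₂ v * (Real.exp (σ ^ 2 * v) - 1) * A v)
        - ∫ v in (0:ℝ)..u, f₂ v * (Real.exp (σ ^ 2 * v) - 1) * dB v := by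
    rw [← intervalIntegral.integral_sub
      (((hf₂c.fun_mul hwc).fun_mul hA).intervalIntegrable _ _)
      (((hf₂c.fun_mul hwc).fun_mul hdB).intervalIntegrable _ _)]
    exact intervalIntegral.integral_congr fun v _ => by ring
  have key' : (∫ v in (0:ℝ)..u, B v * (Real.exp (σ ^ 2 * v) - 1) * deriv f₂ v)
      = B u * (Real.exp (σ ^ 2 * u) - 1) * f₂ u
        - ∫ v in (0:ℝ)..u,
            (dB v * (Real.exp (σ ^ 2 * v) - 1) + B v * (σ ^ 2 * Real.exp (σ ^ 2 * v))) * f₂ v := by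
    rw [key]; ring
  rw [e1, e3, key', e2]
  ring

private theorem aux_ibp_outer (T : ℝ) (f₂ : ℝ → ℝ) (hf₂ : ContDiff ℝ 1 f₂)
    (hf₂0 : f₂ 0 = 0) (hf₂T : f₂ T = 0)
    (A B dB γ dγ : ℝ → ℝ) (hA : Continuous A)
    (hB : ∀ r, HasDerivAt B (dB r) r) (hdB : Continuous dB)
    (hγ : ∀ r, HasDerivAt γ (dγ r) r) (hdγ : Continuous dγ) :
    ∫ u in (0:ℝ)..T, γ u * (f₂ u * A u + deriv f₂ u * B u)
      = (∫ u in (0:ℝ)..T, γ u * f₂ u * (A u - dB u))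
        - ∫ u in (0:ℝ)..T, f₂ u * B u * dγ u := by
  have hdf₂c : Continuous (deriv f₂) := hf₂.continuous_deriv le_rfl
  have hf₂c : Continuous f₂ := hf₂.continuous
  have hBd : Differentiable ℝ B := fun r => (hB r).differentiableAt
  have hBc : Continuous B := hBd.continuous
  have hγd : Differentiable ℝ γ := fun r => (hγ r).differentiableAt
  have hγc : Continuous γ := hγd.continuous
  have key := intervalIntegral.integral_mul_deriv_eq_deriv_mul
    (u := fun r => B r * γ r) (v := f₂)
    (u' := fun r => dB r * γ r + B r * dγ r) (v' := deriv f₂) (a := 0) (b := T)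
    (fun x _ => (hB x).mul (hγ x))
    (fun x _ => (hf₂.differentiable one_ne_zero x).hasDerivAt)
    (((hdB.mul hγc).add (hBc.mul hdγ)).intervalIntegrable _ _)
    (hdf₂c.intervalIntegrable _ _)
  simp only [hf₂0, hf₂T, mul_zero] at key
  have e1 : (∫ u in (0:ℝ)..T, γ u * (f₂ u * A u + deriv f₂ u * B u))
      = (∫ u in (0:ℝ)..T, γ u * f₂ u * A u)
        + ∫ u in (0:ℝ)..T, B u * γ u * deriv f₂ u := by
    rw [← intervalIntegral.integral_add
      (((hγc.fun_mul hf₂c).fun_mul hA).intervalIntegrable _ _)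
      (((hBc.fun_mul hγc).fun_mul hdf₂c).intervalIntegrable _ _)]
    exact intervalIntegral.integral_congr fun v _ => by ring
  have e2 : (∫ u in (0:ℝ)..T, (dB u * γ u + B u * dγ u) * f₂ u)
      = (∫ u in (0:ℝ)..T, γ u * f₂ u * dB u)
        + ∫ u in (0:ℝ)..T, f₂ u * B u * dγ u := by
    rw [← intervalIntegral.integral_add
      (((hγc.fun_mul hf₂c).fun_mul hdB).intervalIntegrable _ _)
      (((hf₂c.fun_mul hBc).fun_mul hdγ).intervalIntegrable _ _)]
    exact intervalIntegral.integral_congr fun v _ => by ring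
  have e3 : (∫ u in (0:ℝ)..T, γ u * f₂ u * (A u - dB u))
      = (∫ u in (0:ℝ)..T, γ u * f₂ u * A u)
        - ∫ u in (0:ℝ)..T, γ u * f₂ u * dB u := by
    rw [← intervalIntegral.integral_sub
      (((hγc.fun_mul hf₂c).fun_mul hA).intervalIntegrable _ _)
      (((hγc.fun_mul hf₂c).fun_mul hdB).intervalIntegrable _ _)]
    exact intervalIntegral.integral_congr fun v _ => by ring
  have key' : (∫ u in (0:ℝ)..T, B u * γ u * deriv f₂ u)
      = - ∫ u in (0:ℝ)..T, (dB u * γ u + B u * dγ u) * f₂ u := by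
    rw [key]; ring
  rw [e1, e3, key', e2]
  ring



/-- Derivative of the perturbed functional
`J(ε) = ∫₀ᵀ (2λ∫₀ᵘ F(g_ε, g_ε')(e^{σ²v}−1) dv + 1) F(g_ε, g_ε') du`, `g_ε = f₁ + ε f₂`,
`f₂(0) = f₂(T) = 0`, in the form obtained after integration by parts. -/
theorem stmt12 (T lam σ : ℝ) (hT : 0 < T) (hlam : 0 < lam) (hσ : 0 < σ)
    (F Fa Fb : ℝ → ℝ → ℝ)
    (hF : ContDiff ℝ 2 (Function.uncurry F))
    (hFa : ∀ a b : ℝ, HasDerivAt (fun x => F x b) (Fa a b) a)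
    (hFb : ∀ a b : ℝ, HasDerivAt (fun y => F a y) (Fb a b) b)
    (f₁ f₂ : ℝ → ℝ) (hf₁ : ContDiff ℝ 2 f₁) (hf₂ : ContDiff ℝ 2 f₂)
    (hf₂0 : f₂ 0 = 0) (hf₂T : f₂ T = 0)
    (J : ℝ → ℝ)
    (hJ : ∀ ε : ℝ, J ε = ∫ u in (0:ℝ)..T,
      (2 * lam * (∫ v in (0:ℝ)..u,
          F (f₁ v + ε * f₂ v) (deriv f₁ v + ε * deriv f₂ v) * (Real.exp (σ ^ 2 * v) - 1)) + 1)
        * F (f₁ u + ε * f₂ u) (deriv f₁ u + ε * deriv f₂ u))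
    (ε : ℝ) :
    HasDerivAt J
      ((∫ u in (0:ℝ)..T,
          (2 * lam * (∫ v in (0:ℝ)..u, f₂ v * (Real.exp (σ ^ 2 * v) - 1)
              * (Fa (f₁ v + ε * f₂ v) (deriv f₁ v + ε * deriv f₂ v)
                - deriv (fun r => Fb (f₁ r + ε * f₂ r) (deriv f₁ r + ε * deriv f₂ r)) v))
            - 2 * lam * (∫ v in (0:ℝ)..u, f₂ v
                * Fb (f₁ v + ε * f₂ v) (deriv f₁ v + ε * deriv f₂ v)
                * σ ^ 2 * Real.exp (σ ^ 2 * v)))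
            * F (f₁ u + ε * f₂ u) (deriv f₁ u + ε * deriv f₂ u))
        + ∫ u in (0:ℝ)..T,
            (2 * lam * (∫ v in (0:ℝ)..u,
                F (f₁ v + ε * f₂ v) (deriv f₁ v + ε * deriv f₂ v)
                  * (Real.exp (σ ^ 2 * v) - 1)) + 1)
              * f₂ u
              * (Fa (f₁ u + ε * f₂ u) (deriv f₁ u + ε * deriv f₂ u)
                - deriv (fun r =>
                    Fb (f₁ r + ε * f₂ r) (deriv f₁ r + ε * deriv f₂ r)) u)) ε := by
  -- ### preliminary facts about F, Fa, Fb
  have hFdiff : Differentiable ℝ (Function.uncurry F) := hF.differentiable two_ne_zero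
  have hfd : Continuous (fderiv ℝ (Function.uncurry F)) := hF.continuous_fderiv two_ne_zero
  have hFa_eq : ∀ a b : ℝ, Fa a b = fderiv ℝ (Function.uncurry F) (a, b) (1, 0) := by
    intro a b
    have h2 : HasDerivAt (fun x : ℝ => (x, b)) ((1:ℝ), (0:ℝ)) a :=
      (hasDerivAt_id a).prodMk (hasDerivAt_const a b)
    exact (hFa a b).unique ((hFdiff (a, b)).hasFDerivAt.comp_hasDerivAt a h2 :)
  have hFb_eq : ∀ a b : ℝ, Fb a b = fderiv ℝ (Function.uncurry F) (a, b) (0, 1) := by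
    intro a b
    have h2 : HasDerivAt (fun y : ℝ => (a, y)) ((0:ℝ), (1:ℝ)) b :=
      (hasDerivAt_const b a).prodMk (hasDerivAt_id b)
    exact (hFb a b).unique ((hFdiff (a, b)).hasFDerivAt.comp_hasDerivAt b h2 :)
  have hFaC : Continuous (fun p : ℝ × ℝ => Fa p.1 p.2) := by
    have h : Continuous (fun p : ℝ × ℝ => fderiv ℝ (Function.uncurry F) p ((1:ℝ), (0:ℝ))) :=
      hfd.clm_apply continuous_const
    have e : (fun p : ℝ × ℝ => Fa p.1 p.2)
        = fun p : ℝ × ℝ => fderiv ℝ (Function.uncurry F) p ((1:ℝ), (0:ℝ)) := by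
      funext p; exact hFa_eq p.1 p.2
    rw [e]; exact h
  have hFbC : Continuous (fun p : ℝ × ℝ => Fb p.1 p.2) := by
    have h : Continuous (fun p : ℝ × ℝ => fderiv ℝ (Function.uncurry F) p ((0:ℝ), (1:ℝ))) :=
      hfd.clm_apply continuous_const
    have e : (fun p : ℝ × ℝ => Fb p.1 p.2)
        = fun p : ℝ × ℝ => fderiv ℝ (Function.uncurry F) p ((0:ℝ), (1:ℝ)) := by
      funext p; exact hFb_eq p.1 p.2
    rw [e]; exact h
  have hdf₁ : Continuous (deriv f₁) := hf₁.continuous_deriv one_le_two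
  have hdf₂ : Continuous (deriv f₂) := hf₂.continuous_deriv one_le_two
  have hf₁c : Continuous f₁ := hf₁.continuous
  have hf₂c : Continuous f₂ := hf₂.continuous
  -- the parametrized curve (a, u) ↦ (g_a u, g_a' u)
  have hGC : Continuous (fun p : ℝ × ℝ =>
      ((f₁ p.2 + p.1 * f₂ p.2, deriv f₁ p.2 + p.1 * deriv f₂ p.2) : ℝ × ℝ)) := by fun_prop
  have hΦC : Continuous (Function.uncurry fun a u : ℝ =>
      F (f₁ u + a * f₂ u) (deriv f₁ u + a * deriv f₂ u)) :=
    (hF.continuous.comp hGC : _)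
  have hΨC : Continuous (Function.uncurry fun a u : ℝ =>
      f₂ u * Fa (f₁ u + a * f₂ u) (deriv f₁ u + a * deriv f₂ u)
        + deriv f₂ u * Fb (f₁ u + a * f₂ u) (deriv f₁ u + a * deriv f₂ u)) :=
    ((hf₂c.comp continuous_snd).mul (hFaC.comp hGC)).add
      ((hdf₂.comp continuous_snd).mul (hFbC.comp hGC))
  -- chain rule in the parameter
  have hchain : ∀ a u : ℝ, HasDerivAt
      (fun x => F (f₁ u + x * f₂ u) (deriv f₁ u + x * deriv f₂ u))
      (f₂ u * Fa (f₁ u + a * f₂ u) (deriv f₁ u + a * deriv f₂ u)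
        + deriv f₂ u * Fb (f₁ u + a * f₂ u) (deriv f₁ u + a * deriv f₂ u)) a := by
    intro a u
    have h2 : HasDerivAt (fun x : ℝ => (f₁ u + x * f₂ u, deriv f₁ u + x * deriv f₂ u))
        ((f₂ u, deriv f₂ u) : ℝ × ℝ) a := by
      simpa using (((hasDerivAt_id a).mul_const (f₂ u)).const_add (f₁ u)).prodMk
        (((hasDerivAt_id a).mul_const (deriv f₂ u)).const_add (deriv f₁ u))
    have h3 := (hFdiff (f₁ u + a * f₂ u, deriv f₁ u + a * deriv f₂ u)).hasFDerivAt.comp_hasDerivAt a h2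
    have e : fderiv ℝ (Function.uncurry F) (f₁ u + a * f₂ u, deriv f₁ u + a * deriv f₂ u)
          ((f₂ u, deriv f₂ u) : ℝ × ℝ)
        = f₂ u * Fa (f₁ u + a * f₂ u) (deriv f₁ u + a * deriv f₂ u)
          + deriv f₂ u * Fb (f₁ u + a * f₂ u) (deriv f₁ u + a * deriv f₂ u) := by
      rw [hFa_eq, hFb_eq]
      have hv : ((f₂ u, deriv f₂ u) : ℝ × ℝ)
          = f₂ u • ((1:ℝ), (0:ℝ)) + deriv f₂ u • ((0:ℝ), (1:ℝ)) := by simp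
      rw [hv, map_add, ContinuousLinearMap.map_smul, ContinuousLinearMap.map_smul,
        smul_eq_mul, smul_eq_mul]
    rw [← e]; exact h3
  -- C¹ smoothness of  r ↦ Fb (g r) (g' r)  at fixed ε
  have hBc1 : ContDiff ℝ 1 (fun r => Fb (f₁ r + ε * f₂ r) (deriv f₁ r + ε * deriv f₂ r)) := by
    have hg : ContDiff ℝ 1 (fun r => ((f₁ r + ε * f₂ r, deriv f₁ r + ε * deriv f₂ r) : ℝ × ℝ)) := by
      apply ContDiff.prodMk
      · exact (hf₁.of_le one_le_two).add ((hf₂.of_le one_le_two).const_smul ε)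
      · have h1 : ContDiff ℝ 1 (deriv f₁) := by
          have := (contDiff_succ_iff_deriv (f := f₁) (n := 1)).mp (by exact_mod_cast hf₁)
          exact this.2.2
        have h2 : ContDiff ℝ 1 (deriv f₂) := by
          have := (contDiff_succ_iff_deriv (f := f₂) (n := 1)).mp (by exact_mod_cast hf₂)
          exact this.2.2
        exact h1.add (h2.const_smul ε)
    have hfb1 : ContDiff ℝ 1 (fun p : ℝ × ℝ => Fb p.1 p.2) := by
      have e : (fun p : ℝ × ℝ => Fb p.1 p.2)
          = fun p : ℝ × ℝ => fderiv ℝ (Function.uncurry F) p ((0:ℝ), (1:ℝ)) := by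
        funext p; exact hFb_eq p.1 p.2
      rw [e]
      exact (ContinuousLinearMap.apply ℝ ℝ ((0:ℝ),(1:ℝ))).contDiff.comp
        (hF.fderiv_right (m := 1) (by norm_num))
    exact hfb1.comp hg
  
  -- differentiation under the integral sign
  have main := aux_deriv_main T lam (fun v => Real.exp (σ ^ 2 * v) - 1) (by fun_prop)
    (fun a u => F (f₁ u + a * f₂ u) (deriv f₁ u + a * deriv f₂ u))
    (fun a u => f₂ u * Fa (f₁ u + a * f₂ u) (deriv f₁ u + a * deriv f₂ u)
      + deriv f₂ u * Fb (f₁ u + a * f₂ u) (deriv f₁ u + a * deriv f₂ u))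
    hΦC hΨC hchain ε
  have main' : HasDerivAt (fun a => ∫ u in (0:ℝ)..T,
      (2 * lam * (∫ v in (0:ℝ)..u,
          F (f₁ v + a * f₂ v) (deriv f₁ v + a * deriv f₂ v) * (Real.exp (σ ^ 2 * v) - 1)) + 1)
        * F (f₁ u + a * f₂ u) (deriv f₁ u + a * deriv f₂ u))
    (∫ u in (0:ℝ)..T,
      2 * lam * (∫ v in (0:ℝ)..u, (f₂ v * Fa (f₁ v + ε * f₂ v) (deriv f₁ v + ε * deriv f₂ v) + deriv f₂ v * Fb (f₁ v + ε * f₂ v) (deriv f₁ v + ε * deriv f₂ v)) * (Real.exp (σ ^ 2 * v) - 1)) * F (f₁ u + ε * f₂ u) (deriv f₁ u + ε * deriv f₂ u)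
      + (2 * lam * (∫ v in (0:ℝ)..u, F (f₁ v + ε * f₂ v) (deriv f₁ v + ε * deriv f₂ v) * (Real.exp (σ ^ 2 * v) - 1)) + 1) * (f₂ u * Fa (f₁ u + ε * f₂ u) (deriv f₁ u + ε * deriv f₂ u) + deriv f₂ u * Fb (f₁ u + ε * f₂ u) (deriv f₁ u + ε * deriv f₂ u))) ε := main
  have hJfun : J = fun a => ∫ u in (0:ℝ)..T,
      (2 * lam * (∫ v in (0:ℝ)..u,
          F (f₁ v + a * f₂ v) (deriv f₁ v + a * deriv f₂ v) * (Real.exp (σ ^ 2 * v) - 1)) + 1)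
        * F (f₁ u + a * f₂ u) (deriv f₁ u + a * deriv f₂ u) := funext hJ
  rw [hJfun]
  -- continuity facts at the fixed parameter ε
  have hgεc : Continuous fun u : ℝ => ((f₁ u + ε * f₂ u, deriv f₁ u + ε * deriv f₂ u) : ℝ × ℝ) := by
    fun_prop
  have hAc : Continuous fun u : ℝ => Fa (f₁ u + ε * f₂ u) (deriv f₁ u + ε * deriv f₂ u) := hFaC.comp hgεc
  have hBc : Continuous fun u : ℝ => Fb (f₁ u + ε * f₂ u) (deriv f₁ u + ε * deriv f₂ u) := hFbC.comp hgεc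
  have hΦεc : Continuous fun u : ℝ => F (f₁ u + ε * f₂ u) (deriv f₁ u + ε * deriv f₂ u) := hF.continuous.comp hgεc
  have hdBc : Continuous (deriv (fun r => Fb (f₁ r + ε * f₂ r) (deriv f₁ r + ε * deriv f₂ r))) := hBc1.continuous_deriv le_rfl
  have hBd : ∀ r : ℝ, HasDerivAt (fun r => Fb (f₁ r + ε * f₂ r) (deriv f₁ r + ε * deriv f₂ r))
      (deriv (fun r => Fb (f₁ r + ε * f₂ r) (deriv f₁ r + ε * deriv f₂ r)) r) r := fun r => (hBc1.differentiable one_ne_zero r).hasDerivAt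
  have hwc : Continuous fun v : ℝ => Real.exp (σ ^ 2 * v) - 1 := by fun_prop
  have hec : Continuous fun v : ℝ => Real.exp (σ ^ 2 * v) := by fun_prop
  have hφc : Continuous fun v : ℝ => F (f₁ v + ε * f₂ v) (deriv f₁ v + ε * deriv f₂ v) * (Real.exp (σ ^ 2 * v) - 1) := hΦεc.mul hwc
  have hΨεc : Continuous fun v : ℝ => (f₂ v * Fa (f₁ v + ε * f₂ v) (deriv f₁ v + ε * deriv f₂ v) + deriv f₂ v * Fb (f₁ v + ε * f₂ v) (deriv f₁ v + ε * deriv f₂ v)) := (hf₂c.mul hAc).add (hdf₂.mul hBc)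
  have hγd : ∀ u : ℝ, HasDerivAt (fun u => 2 * lam * (∫ v in (0:ℝ)..u, F (f₁ v + ε * f₂ v) (deriv f₁ v + ε * deriv f₂ v) * (Real.exp (σ ^ 2 * v) - 1)) + 1)
      (2 * lam * (F (f₁ u + ε * f₂ u) (deriv f₁ u + ε * deriv f₂ u) * (Real.exp (σ ^ 2 * u) - 1))) u := fun u =>
    (HasDerivAt.const_mul (2 * lam) ((hφc.integral_hasStrictDerivAt 0 u).hasDerivAt)).add_const 1
  have hdγc : Continuous fun u : ℝ => 2 * lam * (F (f₁ u + ε * f₂ u) (deriv f₁ u + ε * deriv f₂ u) * (Real.exp (σ ^ 2 * u) - 1)) :=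
    continuous_const.mul (hΦεc.mul hwc)
  have hIεc : Continuous fun u : ℝ => (∫ v in (0:ℝ)..u, (f₂ v * Fa (f₁ v + ε * f₂ v) (deriv f₁ v + ε * deriv f₂ v) + deriv f₂ v * Fb (f₁ v + ε * f₂ v) (deriv f₁ v + ε * deriv f₂ v)) * (Real.exp (σ ^ 2 * v) - 1)) :=
    intervalIntegral.continuous_primitive (fun a b => (hΨεc.mul hwc).intervalIntegrable a b) 0
  have hIc : Continuous fun u : ℝ => (∫ v in (0:ℝ)..u, F (f₁ v + ε * f₂ v) (deriv f₁ v + ε * deriv f₂ v) * (Real.exp (σ ^ 2 * v) - 1)) :=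
    intervalIntegral.continuous_primitive (fun a b => hφc.intervalIntegrable a b) 0
  have hIAc : Continuous fun u : ℝ => (∫ v in (0:ℝ)..u, f₂ v * (Real.exp (σ ^ 2 * v) - 1) * (Fa (f₁ v + ε * f₂ v) (deriv f₁ v + ε * deriv f₂ v) - deriv (fun r => Fb (f₁ r + ε * f₂ r) (deriv f₁ r + ε * deriv f₂ r)) v)) :=
    intervalIntegral.continuous_primitive
      (fun a b => (((hf₂c.mul hwc).mul (hAc.sub hdBc))).intervalIntegrable a b) 0
  have hIBc : Continuous fun u : ℝ => (∫ v in (0:ℝ)..u, f₂ v * Fb (f₁ v + ε * f₂ v) (deriv f₁ v + ε * deriv f₂ v) * σ ^ 2 * Real.exp (σ ^ 2 * v)) :=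
    intervalIntegral.continuous_primitive
      (fun a b => ((((hf₂c.mul hBc).mul continuous_const).mul hec)).intervalIntegrable a b) 0
  have hγc : Continuous fun u : ℝ => (2 * lam * (∫ v in (0:ℝ)..u, F (f₁ v + ε * f₂ v) (deriv f₁ v + ε * deriv f₂ v) * (Real.exp (σ ^ 2 * v) - 1)) + 1) :=
    (continuous_const.mul hIc).add continuous_const
  -- the two integration-by-parts identities
  have hinner : ∀ u : ℝ, (∫ v in (0:ℝ)..u, (f₂ v * Fa (f₁ v + ε * f₂ v) (deriv f₁ v + ε * deriv f₂ v) + deriv f₂ v * Fb (f₁ v + ε * f₂ v) (deriv f₁ v + ε * deriv f₂ v)) * (Real.exp (σ ^ 2 * v) - 1))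
      = (∫ v in (0:ℝ)..u, f₂ v * (Real.exp (σ ^ 2 * v) - 1) * (Fa (f₁ v + ε * f₂ v) (deriv f₁ v + ε * deriv f₂ v) - deriv (fun r => Fb (f₁ r + ε * f₂ r) (deriv f₁ r + ε * deriv f₂ r)) v)) - (∫ v in (0:ℝ)..u, f₂ v * Fb (f₁ v + ε * f₂ v) (deriv f₁ v + ε * deriv f₂ v) * σ ^ 2 * Real.exp (σ ^ 2 * v)) + f₂ u * (Fb (f₁ u + ε * f₂ u) (deriv f₁ u + ε * deriv f₂ u) * (Real.exp (σ ^ 2 * u) - 1)) := fun u =>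
    aux_ibp_inner σ f₂ (hf₂.of_le one_le_two) hf₂0
      (fun v => Fa (f₁ v + ε * f₂ v) (deriv f₁ v + ε * deriv f₂ v))
      (fun r => Fb (f₁ r + ε * f₂ r) (deriv f₁ r + ε * deriv f₂ r))
      (deriv (fun r => Fb (f₁ r + ε * f₂ r) (deriv f₁ r + ε * deriv f₂ r))) hAc hBd hdBc u
  have houter : (∫ u in (0:ℝ)..T, (2 * lam * (∫ v in (0:ℝ)..u, F (f₁ v + ε * f₂ v) (deriv f₁ v + ε * deriv f₂ v) * (Real.exp (σ ^ 2 * v) - 1)) + 1) * (f₂ u * Fa (f₁ u + ε * f₂ u) (deriv f₁ u + ε * deriv f₂ u) + deriv f₂ u * Fb (f₁ u + ε * f₂ u) (deriv f₁ u + ε * deriv f₂ u)))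
      = (∫ u in (0:ℝ)..T, (2 * lam * (∫ v in (0:ℝ)..u, F (f₁ v + ε * f₂ v) (deriv f₁ v + ε * deriv f₂ v) * (Real.exp (σ ^ 2 * v) - 1)) + 1) * f₂ u * (Fa (f₁ u + ε * f₂ u) (deriv f₁ u + ε * deriv f₂ u) - deriv (fun r => Fb (f₁ r + ε * f₂ r) (deriv f₁ r + ε * deriv f₂ r)) u))
        - ∫ u in (0:ℝ)..T, f₂ u * Fb (f₁ u + ε * f₂ u) (deriv f₁ u + ε * deriv f₂ u) * (2 * lam * (F (f₁ u + ε * f₂ u) (deriv f₁ u + ε * deriv f₂ u) * (Real.exp (σ ^ 2 * u) - 1))) :=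
    aux_ibp_outer T f₂ (hf₂.of_le one_le_two) hf₂0 hf₂T
      (fun u => Fa (f₁ u + ε * f₂ u) (deriv f₁ u + ε * deriv f₂ u))
      (fun r => Fb (f₁ r + ε * f₂ r) (deriv f₁ r + ε * deriv f₂ r))
      (deriv (fun r => Fb (f₁ r + ε * f₂ r) (deriv f₁ r + ε * deriv f₂ r)))
      (fun u => 2 * lam * (∫ v in (0:ℝ)..u, F (f₁ v + ε * f₂ v) (deriv f₁ v + ε * deriv f₂ v) * (Real.exp (σ ^ 2 * v) - 1)) + 1)
      (fun u => 2 * lam * (F (f₁ u + ε * f₂ u) (deriv f₁ u + ε * deriv f₂ u) * (Real.exp (σ ^ 2 * u) - 1)))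
      hAc hBd hdBc hγd hdγc
  -- splitting the derivative integral
  have hsplit : (∫ u in (0:ℝ)..T,
        2 * lam * (∫ v in (0:ℝ)..u, (f₂ v * Fa (f₁ v + ε * f₂ v) (deriv f₁ v + ε * deriv f₂ v) + deriv f₂ v * Fb (f₁ v + ε * f₂ v) (deriv f₁ v + ε * deriv f₂ v)) * (Real.exp (σ ^ 2 * v) - 1)) * F (f₁ u + ε * f₂ u) (deriv f₁ u + ε * deriv f₂ u) + (2 * lam * (∫ v in (0:ℝ)..u, F (f₁ v + ε * f₂ v) (deriv f₁ v + ε * deriv f₂ v) * (Real.exp (σ ^ 2 * v) - 1)) + 1) * (f₂ u * Fa (f₁ u + ε * f₂ u) (deriv f₁ u + ε * deriv f₂ u) + deriv f₂ u * Fb (f₁ u + ε * f₂ u) (deriv f₁ u + ε * deriv f₂ u)))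
      = (∫ u in (0:ℝ)..T, 2 * lam * (∫ v in (0:ℝ)..u, (f₂ v * Fa (f₁ v + ε * f₂ v) (deriv f₁ v + ε * deriv f₂ v) + deriv f₂ v * Fb (f₁ v + ε * f₂ v) (deriv f₁ v + ε * deriv f₂ v)) * (Real.exp (σ ^ 2 * v) - 1)) * F (f₁ u + ε * f₂ u) (deriv f₁ u + ε * deriv f₂ u))
        + ∫ u in (0:ℝ)..T, (2 * lam * (∫ v in (0:ℝ)..u, F (f₁ v + ε * f₂ v) (deriv f₁ v + ε * deriv f₂ v) * (Real.exp (σ ^ 2 * v) - 1)) + 1) * (f₂ u * Fa (f₁ u + ε * f₂ u) (deriv f₁ u + ε * deriv f₂ u) + deriv f₂ u * Fb (f₁ u + ε * f₂ u) (deriv f₁ u + ε * deriv f₂ u)) :=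
    intervalIntegral.integral_add
      (((continuous_const.mul hIεc).mul hΦεc).intervalIntegrable _ _)
      ((hγc.mul hΨεc).intervalIntegrable _ _)
  have h1 : (∫ u in (0:ℝ)..T, 2 * lam * (∫ v in (0:ℝ)..u, (f₂ v * Fa (f₁ v + ε * f₂ v) (deriv f₁ v + ε * deriv f₂ v) + deriv f₂ v * Fb (f₁ v + ε * f₂ v) (deriv f₁ v + ε * deriv f₂ v)) * (Real.exp (σ ^ 2 * v) - 1)) * F (f₁ u + ε * f₂ u) (deriv f₁ u + ε * deriv f₂ u))
      = (∫ u in (0:ℝ)..T, (2 * lam * (∫ v in (0:ℝ)..u, f₂ v * (Real.exp (σ ^ 2 * v) - 1) * (Fa (f₁ v + ε * f₂ v) (deriv f₁ v + ε * deriv f₂ v) - deriv (fun r => Fb (f₁ r + ε * f₂ r) (deriv f₁ r + ε * deriv f₂ r)) v)) - 2 * lam * (∫ v in (0:ℝ)..u, f₂ v * Fb (f₁ v + ε * f₂ v) (deriv f₁ v + ε * deriv f₂ v) * σ ^ 2 * Real.exp (σ ^ 2 * v))) * F (f₁ u + ε * f₂ u) (deriv f₁ u + ε * deriv f₂ u)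)
        + ∫ u in (0:ℝ)..T, 2 * lam * (f₂ u * (Fb (f₁ u + ε * f₂ u) (deriv f₁ u + ε * deriv f₂ u) * (Real.exp (σ ^ 2 * u) - 1))) * F (f₁ u + ε * f₂ u) (deriv f₁ u + ε * deriv f₂ u) := by
    rw [← intervalIntegral.integral_add
      ((((continuous_const.fun_mul hIAc).fun_sub (continuous_const.fun_mul hIBc)).fun_mul hΦεc).intervalIntegrable _ _)
      (((continuous_const.fun_mul (hf₂c.fun_mul (hBc.fun_mul hwc))).fun_mul hΦεc).intervalIntegrable _ _)]
    apply intervalIntegral.integral_congr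
    intro u _
    simp only
    rw [hinner u]
    ring
  have hE : (∫ u in (0:ℝ)..T, 2 * lam * (f₂ u * (Fb (f₁ u + ε * f₂ u) (deriv f₁ u + ε * deriv f₂ u) * (Real.exp (σ ^ 2 * u) - 1))) * F (f₁ u + ε * f₂ u) (deriv f₁ u + ε * deriv f₂ u))
      = ∫ u in (0:ℝ)..T, f₂ u * Fb (f₁ u + ε * f₂ u) (deriv f₁ u + ε * deriv f₂ u) * (2 * lam * (F (f₁ u + ε * f₂ u) (deriv f₁ u + ε * deriv f₂ u) * (Real.exp (σ ^ 2 * u) - 1))) :=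
    intervalIntegral.integral_congr fun u _ => by ring
  convert main' using 2
  rw [hsplit, h1, houter, hE]
  ring
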